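/- arXiv:1207.6664 — 3 statements merged into one kernel-verified Lean document; each statement's English description precedes it below -/
import Mathlib

section
/- Let $E,F$ be Banach spaces (over the real or complex field), $1<p<\infty$, $1/p+1/p^*=1$, and $T:E\to F$ a bounded linear operator. The following are equivalent: (i) for every sequence $(x_i)_{i=1}^\infty$ in $E$ with $\sum_{i=1}^\infty\|x_i\|^p<\infty$, the sequence $(T(x_i))_{i=1}^\infty$ is Cohen strongly $p$-summing in $F$; (ii) there exists $C>0$ such that $\sum_{i=1}^m |\varphi_i(T(x_i))| \le C\,(\sum_{i=1}^m\|x_i\|^p)^{1/p}\,\|(\varphi_i)_{i=1}^m\|_{w,p^*}$ for all $m\in\mathbb{N}$, all $x_1,\dots,x_m\in E$ and all $\varphi_1,\dots,\varphi_m\in F'$. -/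
open scoped BigOperators

/-- The weak `q`-norm of a finite family of continuous linear functionals on `F`:
`sup_{y ∈ B_F} (∑ i ‖φ i y‖^q)^(1/q)`. -/
noncomputable def weakNorm {𝕜 F : Type*} [RCLike 𝕜] [NormedAddCommGroup F] [NormedSpace 𝕜 F]
    {ι : Type*} [Fintype ι] (q : ℝ) (φ : ι → F →L[𝕜] 𝕜) : ℝ :=
  ⨆ y : Metric.closedBall (0 : F) 1, (∑ i, ‖φ i (y : F)‖ ^ q) ^ (1 / q)

/-!
(ii) ⇒ (i) is the inequality applied to finite sections. For (i) ⇒ (ii), the inequality is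
homogeneous in `x` and in `φ` separately, so if no constant works we find, for every `n`, finite
blocks with `∑ ‖xᵢ‖ᵖ ≤ 2⁻ⁿ`, weak `q`-sums `≤ 2⁻ⁿ` and `∑ ‖φᵢ (T xᵢ)‖ > 1`. Concatenating the
blocks gives an absolutely `p`-summable sequence and a weakly `q`-summable sequence of functionals
that violate (i).
-/

open Metric

section Sums

lemma rpow_one_div_rpow {x : ℝ} (hx : 0 ≤ x) {p : ℝ} (hp : p ≠ 0) : (x ^ (1 / p)) ^ p = x := by
  rw [one_div, Real.rpow_inv_rpow hx hp]

lemma le_rpow_sum_rpow {ι : Type*} {s : Finset ι} {a : ι → ℝ} (ha : 0 ≤ a) {p : ℝ} (hp : 0 < p)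
    {i : ι} (hi : i ∈ s) : a i ≤ (∑ j ∈ s, a j ^ p) ^ (1 / p) :=
  calc a i = (a i ^ p) ^ (1 / p) := by rw [one_div, Real.rpow_rpow_inv (ha i) hp.ne']
    _ ≤ (∑ j ∈ s, a j ^ p) ^ (1 / p) :=
      Real.rpow_le_rpow (Real.rpow_nonneg (ha i) p)
        (Finset.single_le_sum (fun j _ => Real.rpow_nonneg (ha j) p) hi) (by positivity)

lemma sum_norm_smul_rpow {𝕜 E ι : Type*} [NormedField 𝕜] [SeminormedAddCommGroup E]
    [NormedSpace 𝕜 E] (s : Finset ι) (c : 𝕜) (v : ι → E) (p : ℝ) :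
    ∑ i ∈ s, ‖c • v i‖ ^ p = ‖c‖ ^ p * ∑ i ∈ s, ‖v i‖ ^ p := by
  simp only [norm_smul, Real.mul_rpow (norm_nonneg _) (norm_nonneg _), Finset.mul_sum]

variable {α M : Type*} {β : α → Type*} [∀ a, Fintype (β a)]

lemma summable_sigma_fintype_iff_of_nonneg {f : (Σ a, β a) → ℝ} (hf : 0 ≤ f) :
    Summable f ↔ Summable fun a => ∑ b, f ⟨a, b⟩ := by
  simp only [summable_sigma_of_nonneg hf, tsum_fintype, Summable.of_finite, implies_true,
    true_and]

lemma tsum_sigma_fintype [AddCommMonoid M] [TopologicalSpace M] [ContinuousAdd M] [T3Space M]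
    {f : (Σ a, β a) → M} (hf : Summable f) : ∑' x, f x = ∑' a, ∑ b, f ⟨a, b⟩ := by
  simp only [hf.tsum_sigma' fun _ => .of_finite, tsum_fintype]

end Sums

section WeakNorm

variable {𝕜 F ι : Type*} [RCLike 𝕜] [NormedAddCommGroup F] [NormedSpace 𝕜 F] [Fintype ι] {q : ℝ}

lemma weakNorm_nonneg (φ : ι → F →L[𝕜] 𝕜) : 0 ≤ weakNorm q φ :=
  Real.iSup_nonneg fun _ => by positivity

lemma weakNorm_le (hq : 0 ≤ q) {C : ℝ} (hC : 0 ≤ C) (φ : ι → F →L[𝕜] 𝕜)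
    (h : ∀ y ∈ closedBall (0 : F) 1, ∑ i, ‖φ i y‖ ^ q ≤ C) : weakNorm q φ ≤ C ^ (1 / q) :=
  Real.iSup_le (fun y => by gcongr; exact h y y.2) (by positivity)

lemma rpow_sum_le_weakNorm (hq : 0 ≤ q) (φ : ι → F →L[𝕜] 𝕜) {y : F}
    (hy : y ∈ closedBall (0 : F) 1) : (∑ i, ‖φ i y‖ ^ q) ^ (1 / q) ≤ weakNorm q φ := by
  refine le_ciSup (f := fun z : closedBall (0 : F) 1 => (∑ i, ‖φ i z‖ ^ q) ^ (1 / q))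
    ⟨(∑ i, ‖φ i‖ ^ q) ^ (1 / q), ?_⟩ ⟨y, hy⟩
  rintro _ ⟨⟨z, hz⟩, rfl⟩
  dsimp only
  gcongr with i
  simpa using (φ i).le_opNorm_of_le (mem_closedBall_zero_iff.mp hz)

lemma sum_rpow_le_weakNorm_rpow (hq : 0 < q) (φ : ι → F →L[𝕜] 𝕜) {y : F}
    (hy : y ∈ closedBall (0 : F) 1) : ∑ i, ‖φ i y‖ ^ q ≤ weakNorm q φ ^ q :=
  calc ∑ i, ‖φ i y‖ ^ q = ((∑ i, ‖φ i y‖ ^ q) ^ (1 / q)) ^ q :=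
        (rpow_one_div_rpow (by positivity) hq.ne').symm
    _ ≤ weakNorm q φ ^ q := by gcongr; exact rpow_sum_le_weakNorm hq.le φ hy

lemma norm_le_weakNorm (hq : 0 < q) (φ : ι → F →L[𝕜] 𝕜) (i : ι) : ‖φ i‖ ≤ weakNorm q φ :=
  ContinuousLinearMap.opNorm_le_of_unit_norm (weakNorm_nonneg φ) fun y hy =>
    have hy : y ∈ closedBall (0 : F) 1 := mem_closedBall_zero_iff.mpr hy.le
    (le_rpow_sum_rpow (fun j => norm_nonneg (φ j y)) hq (Finset.mem_univ i)).trans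
      (rpow_sum_le_weakNorm hq.le φ hy)

lemma weakNorm_comp_equiv {κ : Type*} [Fintype κ] (e : κ ≃ ι) (φ : ι → F →L[𝕜] 𝕜) :
    weakNorm q (fun k => φ (e k)) = weakNorm q φ := by
  simp only [weakNorm]
  exact iSup_congr fun y => by rw [Equiv.sum_comp e fun i => ‖φ i y‖ ^ q]

end WeakNorm

section Cohen

variable {𝕜 E F : Type*} [RCLike 𝕜] [NormedAddCommGroup E] [NormedSpace 𝕜 E]
  [NormedAddCommGroup F] [NormedSpace 𝕜 F] {p q : ℝ} (T : E →L[𝕜] F)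

lemma sum_norm_apply_le_card_mul (hp : 0 < p) (hq : 0 < q) {ι : Type*} [Fintype ι]
    (x : ι → E) (φ : ι → F →L[𝕜] 𝕜) :
    ∑ i, ‖φ i (T (x i))‖ ≤
      Fintype.card ι * ‖T‖ * (∑ i, ‖x i‖ ^ p) ^ (1 / p) * weakNorm q φ := by
  have hterm (i : ι) : ‖φ i (T (x i))‖ ≤ ‖T‖ * (∑ i, ‖x i‖ ^ p) ^ (1 / p) * weakNorm q φ :=
    calc ‖φ i (T (x i))‖ ≤ ‖φ i‖ * (‖T‖ * ‖x i‖) := (φ i).le_opNorm_of_le (T.le_opNorm _)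
      _ ≤ weakNorm q φ * (‖T‖ * (∑ i, ‖x i‖ ^ p) ^ (1 / p)) := by
        gcongr
        · exact weakNorm_nonneg φ
        · exact norm_le_weakNorm hq φ i
        · exact le_rpow_sum_rpow (fun j => norm_nonneg (x j)) hp (Finset.mem_univ i)
      _ = _ := by ring
  simpa [mul_assoc] using Finset.sum_le_sum fun i (_ : i ∈ Finset.univ) => hterm i

lemma exists_block_of_forall_lt (hp : 0 < p) (hq : 0 < q)
    (h : ∀ C > 0, ∃ (m : ℕ) (x : Fin m → E) (φ : Fin m → F →L[𝕜] 𝕜),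
      C * (∑ i, ‖x i‖ ^ p) ^ (1 / p) * weakNorm q φ < ∑ i, ‖φ i (T (x i))‖)
    {ε : ℝ} (hε : 0 < ε) :
    ∃ (m : ℕ) (x : Fin m → E) (φ : Fin m → F →L[𝕜] 𝕜), ∑ i, ‖x i‖ ^ p ≤ ε ∧
      (∀ y ∈ closedBall (0 : F) 1, ∑ i, ‖φ i y‖ ^ q ≤ ε) ∧ 1 < ∑ i, ‖φ i (T (x i))‖ := by
  -- rescale the offending block to `(∑ ‖xᵢ‖ᵖ)^(1/p) = ε^(1/p)` and weak norm `ε^(1/q)`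
  set a := ε ^ (1 / p)
  set b := ε ^ (1 / q)
  obtain ⟨m, x, φ, hlt⟩ := h (a * b)⁻¹ (by positivity)
  set A := (∑ i, ‖x i‖ ^ p) ^ (1 / p)
  set W := weakNorm q φ
  have hAW : 0 < A * W := by
    by_contra! hAW
    have hAW0 : A * W = 0 := le_antisymm hAW (mul_nonneg (by positivity) (weakNorm_nonneg φ))
    have hS := sum_norm_apply_le_card_mul T hp hq x φ
    rw [mul_assoc, hAW0, mul_zero] at hS hlt
    linarith
  have hA : 0 < A := lt_of_le_of_ne (by positivity) (left_ne_zero_of_mul hAW.ne').symm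
  have hW : 0 < W := lt_of_le_of_ne (weakNorm_nonneg φ) (right_ne_zero_of_mul hAW.ne').symm
  have ha : 0 < a := by positivity
  have hb : 0 < b := by positivity
  refine ⟨m, fun i => ((a / A : ℝ) : 𝕜) • x i, fun i => ((b / W : ℝ) : 𝕜) • φ i, ?_, ?_, ?_⟩
  · rw [sum_norm_smul_rpow, RCLike.norm_ofReal, abs_of_pos (by positivity),
      ← rpow_one_div_rpow (by positivity : 0 ≤ ∑ i, ‖x i‖ ^ p) hp.ne',
      ← Real.mul_rpow (by positivity) hA.le, div_mul_cancel₀ _ hA.ne',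
      rpow_one_div_rpow hε.le hp.ne']
  · intro y hy
    simp only [smul_apply]
    rw [sum_norm_smul_rpow, RCLike.norm_ofReal, abs_of_pos (by positivity)]
    calc (b / W) ^ q * ∑ i, ‖φ i y‖ ^ q ≤ (b / W) ^ q * W ^ q := by
          gcongr; exact sum_rpow_le_weakNorm_rpow hq φ hy
      _ = ε := by
        rw [← Real.mul_rpow (by positivity) hW.le, div_mul_cancel₀ _ hW.ne',
          rpow_one_div_rpow hε.le hq.ne']
  · have hscale : ∑ i, ‖(((b / W : ℝ) : 𝕜) • φ i) (T (((a / A : ℝ) : 𝕜) • x i))‖ =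
        a / A * (b / W) * ∑ i, ‖φ i (T (x i))‖ := by
      simp only [map_smul, smul_apply, norm_smul, RCLike.norm_ofReal,
        abs_of_pos (div_pos ha hA), abs_of_pos (div_pos hb hW), Finset.mul_sum, mul_assoc]
    calc 1 = a / A * (b / W) * ((a * b)⁻¹ * A * W) := by field_simp
      _ < a / A * (b / W) * ∑ i, ‖φ i (T (x i))‖ := by gcongr
      _ = _ := hscale.symm

lemma exists_not_summable_of_blocks {m : ℕ → ℕ} (x : ∀ n, Fin (m n) → E)
    (φ : ∀ n, Fin (m n) → F →L[𝕜] 𝕜) (hx : ∀ n, ∑ i, ‖x n i‖ ^ p ≤ (1 / 2) ^ n)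
    (hφ : ∀ n, ∀ y ∈ closedBall (0 : F) 1, ∑ i, ‖φ n i y‖ ^ q ≤ (1 / 2) ^ n)
    (hT : ∀ n, 1 < ∑ i, ‖φ n i (T (x n i))‖) :
    ∃ x' : ℕ → E, Summable (fun k => ‖x' k‖ ^ p) ∧ ∃ φ' : ℕ → F →L[𝕜] 𝕜,
      (∃ C : ℝ, ∀ y ∈ closedBall (0 : F) 1, ∀ s : Finset ℕ, ∑ k ∈ s, ‖φ' k y‖ ^ q ≤ C) ∧
      ¬ Summable (fun k => ‖φ' k (T (x' k))‖) := by
  have hm (n : ℕ) : Nonempty (Fin (m n)) := by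
    obtain ⟨i, -⟩ := Finset.exists_ne_zero_of_sum_ne_zero (one_pos.trans (hT n)).ne'
    exact ⟨i⟩
  have : Infinite (Σ n, Fin (m n)) :=
    Infinite.of_injective (fun n => ⟨n, Classical.arbitrary _⟩) fun _ _ h => congrArg Sigma.fst h
  obtain ⟨e⟩ : Nonempty (ℕ ≃ Σ n, Fin (m n)) := nonempty_equiv_of_countable
  have hgeom {g : (Σ n, Fin (m n)) → ℝ} (hg : 0 ≤ g) (hle : ∀ n, ∑ i, g ⟨n, i⟩ ≤ (1 / 2) ^ n) :
      Summable g :=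
    (summable_sigma_fintype_iff_of_nonneg hg).mpr <|
      summable_geometric_two.of_nonneg_of_le (fun n => Finset.sum_nonneg fun i _ => hg _) hle
  refine ⟨fun k => x (e k).1 (e k).2, ?_, fun k => φ (e k).1 (e k).2, ⟨2, ?_⟩, ?_⟩
  · have hg := hgeom (g := fun σ => ‖x σ.1 σ.2‖ ^ p) (fun _ => by positivity) hx
    exact e.summable_iff.mpr hg
  · intro y hy s
    set g : (Σ n, Fin (m n)) → ℝ := fun σ => ‖φ σ.1 σ.2 y‖ ^ q
    have hg : Summable g := hgeom (fun _ => by positivity) fun n => hφ n y hy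
    calc ∑ k ∈ s, g (e k) ≤ ∑' k, g (e k) :=
          (e.summable_iff.mpr hg).sum_le_tsum s fun _ _ => by positivity
      _ = ∑' n, ∑ i, g ⟨n, i⟩ := by rw [e.tsum_eq g, tsum_sigma_fintype hg]
      _ ≤ ∑' n : ℕ, (1 / 2 : ℝ) ^ n :=
          (summable_sigma_fintype_iff_of_nonneg fun _ => by positivity).mp hg
            |>.tsum_le_tsum (fun n => hφ n y hy) summable_geometric_two
      _ = 2 := tsum_geometric_two
  · intro hsum
    set f : (Σ n, Fin (m n)) → ℝ := fun σ => ‖φ σ.1 σ.2 (T (x σ.1 σ.2))‖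
    have hblocks : Summable fun n => ∑ i, f ⟨n, i⟩ :=
      (summable_sigma_fintype_iff_of_nonneg (f := f) fun _ => norm_nonneg _).mp
        ((e.summable_iff (f := f)).mp hsum)
    obtain ⟨n, hn⟩ := (hblocks.tendsto_atTop_zero.eventually (gt_mem_nhds one_pos)).exists
    exact (hT n).not_gt hn

lemma sum_le_of_forall_fin {C : ℝ} (h : ∀ (m : ℕ) (x : Fin m → E) (φ : Fin m → F →L[𝕜] 𝕜),
      ∑ i, ‖φ i (T (x i))‖ ≤ C * (∑ i, ‖x i‖ ^ p) ^ (1 / p) * weakNorm q φ)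
    {ι : Type*} [Fintype ι] (x : ι → E) (φ : ι → F →L[𝕜] 𝕜) :
    ∑ i, ‖φ i (T (x i))‖ ≤ C * (∑ i, ‖x i‖ ^ p) ^ (1 / p) * weakNorm q φ := by
  have e := (Fintype.equivFin ι).symm
  simpa only [Equiv.sum_comp e fun i => ‖φ i (T (x i))‖, Equiv.sum_comp e fun i => ‖x i‖ ^ p,
    weakNorm_comp_equiv] using h _ (fun k => x (e k)) fun k => φ (e k)

lemma summable_of_forall_fin (hp : 0 ≤ p) (hq : 0 ≤ q) {C : ℝ} (hC : 0 ≤ C)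
    (h : ∀ (m : ℕ) (x : Fin m → E) (φ : Fin m → F →L[𝕜] 𝕜),
      ∑ i, ‖φ i (T (x i))‖ ≤ C * (∑ i, ‖x i‖ ^ p) ^ (1 / p) * weakNorm q φ)
    {x : ℕ → E} (hx : Summable fun i => ‖x i‖ ^ p) {φ : ℕ → F →L[𝕜] 𝕜} {C' : ℝ}
    (hφ : ∀ y ∈ closedBall (0 : F) 1, ∀ s : Finset ℕ, ∑ i ∈ s, ‖φ i y‖ ^ q ≤ C') :
    Summable fun i => ‖φ i (T (x i))‖ := by
  have hC' : 0 ≤ C' := by simpa using hφ 0 (mem_closedBall_self zero_le_one) ∅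
  refine summable_of_sum_le (c := C * (∑' i, ‖x i‖ ^ p) ^ (1 / p) * C' ^ (1 / q))
    (fun _ => norm_nonneg _) fun s => ?_
  calc ∑ i ∈ s, ‖φ i (T (x i))‖ = ∑ i : s, ‖φ i (T (x i))‖ := (s.sum_coe_sort _).symm
    _ ≤ C * (∑ i : s, ‖x i‖ ^ p) ^ (1 / p) * weakNorm q fun i : s => φ i :=
        sum_le_of_forall_fin T h _ _
    _ ≤ C * (∑' i, ‖x i‖ ^ p) ^ (1 / p) * C' ^ (1 / q) := by
        gcongr
        · exact weakNorm_nonneg _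
        · rw [s.sum_coe_sort fun i => ‖x i‖ ^ p]
          exact hx.sum_le_tsum s fun _ _ => by positivity
        · refine weakNorm_le hq hC' _ fun y hy => ?_
          rw [s.sum_coe_sort fun i => ‖φ i y‖ ^ q]
          exact hφ y hy s

end Cohen

theorem stmt2_general {𝕜 E F : Type*} [RCLike 𝕜]
    [NormedAddCommGroup E] [NormedSpace 𝕜 E]
    [NormedAddCommGroup F] [NormedSpace 𝕜 F]
    (p q : ℝ) (hp : 1 < p) (hq : 1 / p + 1 / q = 1) (T : E →L[𝕜] F) :
    (∀ x : ℕ → E, Summable (fun i => ‖x i‖ ^ p) →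
      ∀ φ : ℕ → F →L[𝕜] 𝕜,
        (∃ C : ℝ, ∀ y ∈ Metric.closedBall (0 : F) 1, ∀ s : Finset ℕ,
            ∑ i ∈ s, ‖φ i y‖ ^ q ≤ C) →
        Summable (fun i => ‖φ i (T (x i))‖))
    ↔ (∃ C > 0, ∀ (m : ℕ) (x : Fin m → E) (φ : Fin m → F →L[𝕜] 𝕜),
        ∑ i, ‖φ i (T (x i))‖ ≤ C * (∑ i, ‖x i‖ ^ p) ^ (1 / p) * weakNorm q φ) := by
  have hp0 : 0 < p := one_pos.trans hp
  have hq0 : 0 < q :=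
    (Real.holderConjugate_iff.mpr ⟨hp, by simpa only [one_div] using hq⟩).symm.pos
  refine ⟨fun h => ?_, fun ⟨C, hC, hCohen⟩ x hx φ ⟨C', hφ⟩ =>
    summable_of_forall_fin T hp0.le hq0.le hC.le hCohen hx hφ⟩
  by_contra! hfail
  choose m x φ hx hφ hT using fun n : ℕ =>
    exists_block_of_forall_lt T hp0 hq0 hfail (ε := (1 / 2) ^ n) (by positivity)
  obtain ⟨x', hx', φ', hφ', hT'⟩ := exists_not_summable_of_blocks T x φ hx hφ hT
  exact hT' (h x' hx' φ' hφ')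

/-- A bounded linear operator `T : E → F` maps absolutely `p`-summable sequences to
Cohen strongly `p`-summing sequences iff the Cohen summing inequality holds. -/
theorem stmt2 {𝕜 E F : Type*} [RCLike 𝕜]
    [NormedAddCommGroup E] [NormedSpace 𝕜 E] [CompleteSpace E]
    [NormedAddCommGroup F] [NormedSpace 𝕜 F] [CompleteSpace F]
    (p q : ℝ) (hp : 1 < p) (hq : 1 / p + 1 / q = 1) (T : E →L[𝕜] F) :
    (∀ x : ℕ → E, Summable (fun i => ‖x i‖ ^ p) →
      ∀ φ : ℕ → F →L[𝕜] 𝕜,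
        (∃ C : ℝ, ∀ y ∈ Metric.closedBall (0 : F) 1, ∀ s : Finset ℕ,
            ∑ i ∈ s, ‖φ i y‖ ^ q ≤ C) →
        Summable (fun i => ‖φ i (T (x i))‖))
    ↔ (∃ C > 0, ∀ (m : ℕ) (x : Fin m → E) (φ : Fin m → F →L[𝕜] 𝕜),
        ∑ i, ‖φ i (T (x i))‖ ≤ C * (∑ i, ‖x i‖ ^ p) ^ (1 / p) * weakNorm q φ) :=
  stmt2_general p q hp hq T
end

section
/- Let $X_1,\dots,X_n,Y$ be Banach spaces (over the real or complex field), $1<p<\infty$, $1/p+1/p^*=1$, and $T:X_1\times\cdots\times X_n\to Y$ a bounded $n$-linear operator. The following are equivalent: (i) there exists $C>0$ such that $\sum_{i=1}^m|\varphi_i(T(x_i^{(1)},\dots,x_i^{(n)}))|\le C\,(\sum_{i=1}^m\prod_{j=1}^n\|x_i^{(j)}\|^{p})^{1/p}\,\|(\varphi_i)_{i=1}^m\|_{w,p^*}$ for all $m\in\mathbb{N}$, all $x_i^{(j)}\in X_j$ and all $\varphi_i\in Y'$; (ii) there exists $C>0$ such that $\sum_{i=1}^m|\varphi_i(T(x_i^{(1)},\dots,x_i^{(n)}))|\le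 C\,\prod_{j=1}^n(\sum_{i=1}^m\|x_i^{(j)}\|^{np})^{1/(np)}\,\|(\varphi_i)_{i=1}^m\|_{w,p^*}$ for all $m\in\mathbb{N}$, all $x_i^{(j)}\in X_j$ and all $\varphi_i\in Y'$. -/
/-!
One direction is the generalized Hölder inequality
`∑ᵢ ∏ⱼ aⱼᵢ ^ p ≤ ∏ⱼ (∑ᵢ aⱼᵢ ^ (n p)) ^ (1/n)`. For the other, multilinearity lets us rescale
each row `(xᵢ⁽¹⁾, …, xᵢ⁽ⁿ⁾)` by scalars with product `1`, so that all its entries get the same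
norm `(∏ⱼ ‖xᵢ⁽ʲ⁾‖) ^ (1/n)` without changing `T(xᵢ⁽¹⁾, …, xᵢ⁽ⁿ⁾)`; for such balanced rows the
right-hand sides of both inequalities coincide.
-/

open scoped BigOperators

open Finset MeasureTheory

theorem Real.sum_prod_rpow_le_prod_sum_rpow {ι κ : Type*} [Fintype ι] [Fintype κ]
    (f : κ → ι → ℝ) (hf : ∀ j i, 0 ≤ f j i) (w : κ → ℝ) (hw : ∑ j, w j = 1)
    (hw0 : ∀ j, 0 ≤ w j) :
    ∑ i, ∏ j, f j i ^ w j ≤ ∏ j, (∑ i, f j i) ^ w j := by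
  let : MeasurableSpace ι := ⊤
  have : MeasurableSingletonClass ι := ⟨fun _ => trivial⟩
  have key := ENNReal.lintegral_prod_norm_pow_le (μ := Measure.count) univ
    (f := fun j i => ENNReal.ofReal (f j i)) (fun _ _ => measurable_from_top.aemeasurable)
    hw (fun j _ => hw0 j)
  simp only [lintegral_count, tsum_fintype] at key
  have hS : ∀ j, 0 ≤ ∑ i, f j i := fun j => sum_nonneg fun i _ => hf j i
  rw [← ENNReal.ofReal_le_ofReal_iff (prod_nonneg fun j _ => Real.rpow_nonneg (hS j) _),
    ENNReal.ofReal_sum_of_nonneg (fun i _ => prod_nonneg fun j _ => Real.rpow_nonneg (hf j i) _),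
    ENNReal.ofReal_prod_of_nonneg (fun j _ => Real.rpow_nonneg (hS j) _)]
  simp only [ENNReal.ofReal_prod_of_nonneg (fun j _ => Real.rpow_nonneg (hf j _) _),
    ← ENNReal.ofReal_rpow_of_nonneg (hf _ _) (hw0 _),
    ← ENNReal.ofReal_rpow_of_nonneg (hS _) (hw0 _),
    ENNReal.ofReal_sum_of_nonneg (fun i _ => hf _ i)]
  exact key

theorem Real.rpow_sum_prod_rpow_le_prod_rpow_sum_rpow {ι κ : Type*} [Fintype ι] [Fintype κ]
    [Nonempty κ] (a : κ → ι → ℝ) (ha : ∀ j i, 0 ≤ a j i) {p : ℝ} (hp : 0 < p) :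
    (∑ i, ∏ j, a j i ^ p) ^ (1 / p) ≤
      ∏ j, (∑ i, a j i ^ (Fintype.card κ * p)) ^ (1 / (Fintype.card κ * p)) := by
  set N : ℝ := (Fintype.card κ : ℝ)
  have hN : 0 < N := Nat.cast_pos.2 Fintype.card_pos
  have hS : ∀ j, 0 ≤ ∑ i, a j i ^ (N * p) := fun j =>
    sum_nonneg fun i _ => Real.rpow_nonneg (ha j i) _
  have holder := Real.sum_prod_rpow_le_prod_sum_rpow (fun j i => a j i ^ (N * p))
    (fun j i => Real.rpow_nonneg (ha j i) _) (fun _ => 1 / N) (by simp [N, hN.ne'])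
    (fun _ => by positivity)
  have hNp : N * p * (1 / N) = p := by field_simp
  simp only [← Real.rpow_mul (ha _ _), hNp] at holder
  calc (∑ i, ∏ j, a j i ^ p) ^ (1 / p)
      ≤ (∏ j, (∑ i, a j i ^ (N * p)) ^ (1 / N)) ^ (1 / p) := by
        gcongr
        exact sum_nonneg fun i _ => prod_nonneg fun j _ => Real.rpow_nonneg (ha j i) _
    _ = ∏ j, (∑ i, a j i ^ (N * p)) ^ (1 / (N * p)) := by
      rw [← Real.finsetProd_rpow _ _ (fun j _ => Real.rpow_nonneg (hS j) _)]
      simp only [← Real.rpow_mul (hS _), one_div_mul_one_div]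

theorem MultilinearMap.exists_apply_eq_and_norm_eq {𝕜 ι Y : Type*} [RCLike 𝕜] [Fintype ι]
    {X : ι → Type*} [∀ j, NormedAddCommGroup (X j)] [∀ j, NormedSpace 𝕜 (X j)]
    [AddCommGroup Y] [Module 𝕜 Y] (f : MultilinearMap 𝕜 X Y) (v : ∀ j, X j) :
    ∃ w, f w = f v ∧ ∀ j, ‖w j‖ = (∏ k, ‖v k‖) ^ (1 / (Fintype.card ι : ℝ)) := by
  set N : ℝ := (Fintype.card ι : ℝ)
  set A := ∏ k, ‖v k‖
  by_cases hv : ∃ j, v j = 0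
  · obtain ⟨j₀, hj₀⟩ := hv
    have : Nonempty ι := ⟨j₀⟩
    have hA : A = 0 := prod_eq_zero (mem_univ j₀) (by simp [hj₀])
    refine ⟨0, by rw [f.map_coord_zero j₀ hj₀, f.map_coord_zero j₀ rfl], fun j => ?_⟩
    rw [hA, Real.zero_rpow (by simp [N, Fintype.card_ne_zero])]
    simp
  push Not at hv
  have hvpos : ∀ j, 0 < ‖v j‖ := fun j => norm_pos_iff.2 (hv j)
  set c : ι → ℝ := fun j => A ^ (1 / N) / ‖v j‖
  refine ⟨fun j => (c j : 𝕜) • v j, ?_, fun j => ?_⟩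
  · have hc : ∏ j, c j = 1 := by
      rcases isEmpty_or_nonempty ι with _ | _
      · exact prod_of_isEmpty _
      have hA : 0 < A := prod_pos fun j _ => hvpos j
      rw [prod_div_distrib, prod_const, card_univ, one_div,
        Real.rpow_inv_natCast_pow hA.le Fintype.card_ne_zero]
      exact div_self hA.ne'
    rw [f.map_smul_univ, ← RCLike.ofReal_prod, hc, RCLike.ofReal_one, one_smul]
  · rw [norm_smul, RCLike.norm_ofReal, abs_of_nonneg (by positivity),
      div_mul_cancel₀ _ (hvpos j).ne']

theorem MultilinearMap.exists_rescaling_prod_Lp_eq {𝕜 ι κ Y : Type*} [RCLike 𝕜] [Fintype ι]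
    [Nonempty ι] [Fintype κ] {X : ι → Type*} [∀ j, NormedAddCommGroup (X j)]
    [∀ j, NormedSpace 𝕜 (X j)] [AddCommGroup Y] [Module 𝕜 Y] (f : MultilinearMap 𝕜 X Y)
    (x : ∀ j, κ → X j) {p : ℝ} (hp : 0 < p) :
    ∃ x' : ∀ j, κ → X j, (∀ i, f (fun j => x' j i) = f (fun j => x j i)) ∧
      ∏ j, (∑ i, ‖x' j i‖ ^ (Fintype.card ι * p)) ^ (1 / (Fintype.card ι * p)) =
        (∑ i, ∏ j, ‖x j i‖ ^ p) ^ (1 / p) := by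
  choose w hfw hw using fun i => f.exists_apply_eq_and_norm_eq (fun j => x j i)
  refine ⟨fun j i => w i j, hfw, ?_⟩
  set N : ℝ := (Fintype.card ι : ℝ)
  have hN : 0 < N := Nat.cast_pos.2 Fintype.card_pos
  have hNp : 1 / N * (N * p) = p := by field_simp
  have hterm : ∀ j i, ‖w i j‖ ^ (N * p) = ∏ k, ‖x k i‖ ^ p := fun j i => by
    rw [hw, ← Real.rpow_mul (prod_nonneg fun k _ => norm_nonneg _), hNp,
      Real.finsetProd_rpow _ _ fun k _ => norm_nonneg _]
  have hS : 0 ≤ ∑ i, ∏ k, ‖x k i‖ ^ p :=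
    sum_nonneg fun i _ => prod_nonneg fun k _ => Real.rpow_nonneg (norm_nonneg _) _
  simp only [hterm]
  rw [prod_const, card_univ, ← Real.rpow_natCast, ← Real.rpow_mul hS]
  change _ ^ (1 / (N * p) * N) = _
  congr 1
  field_simp

theorem stmt5_general {𝕜 : Type*} [RCLike 𝕜] {n : ℕ} (hn : 0 < n)
    {X : Fin n → Type*} [∀ j, NormedAddCommGroup (X j)] [∀ j, NormedSpace 𝕜 (X j)]
    {Y : Type*} [NormedAddCommGroup Y] [NormedSpace 𝕜 Y]
    (p q : ℝ) (hp : 1 < p)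
    (T : ContinuousMultilinearMap 𝕜 X Y) :
    (∃ C > 0, ∀ (m : ℕ) (x : ∀ j, Fin m → X j) (φ : Fin m → Y →L[𝕜] 𝕜),
        ∑ i, ‖φ i (T (fun j => x j i))‖ ≤
          C * (∑ i, ∏ j, ‖x j i‖ ^ p) ^ (1 / p) * weakNorm q φ)
    ↔ (∃ C > 0, ∀ (m : ℕ) (x : ∀ j, Fin m → X j) (φ : Fin m → Y →L[𝕜] 𝕜),
        ∑ i, ‖φ i (T (fun j => x j i))‖ ≤
          C * (∏ j, (∑ i, ‖x j i‖ ^ ((n : ℝ) * p)) ^ (1 / ((n : ℝ) * p)))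
            * weakNorm q φ) := by
  have : Nonempty (Fin n) := Fin.pos_iff_nonempty.1 hn
  have hp0 : 0 < p := zero_lt_one.trans hp
  constructor
  · rintro ⟨C, hC, H⟩
    refine ⟨C, hC, fun m x φ => (H m x φ).trans ?_⟩
    have hW : 0 ≤ weakNorm q φ := Real.iSup_nonneg fun y => by positivity
    gcongr
    simpa using Real.rpow_sum_prod_rpow_le_prod_rpow_sum_rpow (fun j i => ‖x j i‖)
      (fun j i => norm_nonneg _) hp0
  · rintro ⟨C, hC, H⟩
    refine ⟨C, hC, fun m x φ => ?_⟩
    obtain ⟨x', hTx', hnorm⟩ := T.toMultilinearMap.exists_rescaling_prod_Lp_eq x hp0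
    simp only [Fintype.card_fin] at hnorm
    simp only [ContinuousMultilinearMap.coe_coe] at hTx'
    simpa only [hTx', hnorm] using H m x' φ

/-- For a bounded `n`-linear operator `T : X₁ × ⋯ × Xₙ → Y`, the Cohen summing inequality
with `(∑ᵢ ∏ⱼ ‖xᵢ⁽ʲ⁾‖^p)^(1/p)` holds for some constant iff the inequality with
`∏ⱼ (∑ᵢ ‖xᵢ⁽ʲ⁾‖^(np))^(1/(np))` holds for some constant. -/
theorem stmt5 {𝕜 : Type*} [RCLike 𝕜] {n : ℕ} (hn : 0 < n)
    {X : Fin n → Type*} [∀ j, NormedAddCommGroup (X j)] [∀ j, NormedSpace 𝕜 (X j)]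
    [∀ j, CompleteSpace (X j)]
    {Y : Type*} [NormedAddCommGroup Y] [NormedSpace 𝕜 Y] [CompleteSpace Y]
    (p q : ℝ) (hp : 1 < p) (hq : 1 / p + 1 / q = 1)
    (T : ContinuousMultilinearMap 𝕜 X Y) :
    (∃ C > 0, ∀ (m : ℕ) (x : ∀ j, Fin m → X j) (φ : Fin m → Y →L[𝕜] 𝕜),
        ∑ i, ‖φ i (T (fun j => x j i))‖ ≤
          C * (∑ i, ∏ j, ‖x j i‖ ^ p) ^ (1 / p) * weakNorm q φ)
    ↔ (∃ C > 0, ∀ (m : ℕ) (x : ∀ j, Fin m → X j) (φ : Fin m → Y →L[𝕜] 𝕜),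
        ∑ i, ‖φ i (T (fun j => x j i))‖ ≤
          C * (∏ j, (∑ i, ‖x j i‖ ^ ((n : ℝ) * p)) ^ (1 / ((n : ℝ) * p)))
            * weakNorm q φ) :=
  stmt5_general hn p q hp T
end

section
/- Let $E,F$ be Banach spaces (over the real or complex field), $1<p<\infty$, $1/p+1/p^*=1$, and $n\ge 2$. Suppose $u:E\to F$ is a bounded linear operator that is not Cohen strongly $p$-summing, and let $\varphi\in E'$ with $\varphi\ne 0$. Then the bounded $n$-linear operator $\psi:E^n\to F$ defined by $\psi(x_1,\dots,x_n)=\varphi(x_1)\cdots\varphi(x_{n-1})\,u(x_n)$ is not multiple Cohen strongly $p$-summing. -/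
open Function

lemma Fintype.sum_extend_zero {ι κ N M : Type*} [Fintype ι] [Fintype κ] [Zero N]
    [AddCommMonoid M] {e : ι → κ} (he : Injective e) (φ : ι → N) (g : κ → N → M)
    (hg : ∀ α, g α 0 = 0) :
    ∑ α, g α (extend e φ 0 α) = ∑ i, g (e i) (φ i) := by
  refine (Fintype.sum_of_injective e he _ _ (fun α hα => ?_) fun i => ?_).symm
  · rw [extend_apply' _ _ _ (by simpa using hα), Pi.zero_apply, hg]
  · rw [he.extend_apply]

section

variable {𝕜 E F : Type*} [RCLike 𝕜] [NormedAddCommGroup E] [NormedAddCommGroup F]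
  [NormedSpace 𝕜 F]

lemma weakNorm_extend_zero {ι κ : Type*} [Fintype ι] [Fintype κ] {q : ℝ} (hq : q ≠ 0)
    {e : ι → κ} (he : Injective e) (φ : ι → F →L[𝕜] 𝕜) :
    weakNorm q (extend e φ 0) = weakNorm q φ := by
  unfold weakNorm
  congr! 3 with y
  exact Fintype.sum_extend_zero he φ (fun _ f => ‖f y‖ ^ q) fun _ => by
    simp [Real.zero_rpow hq]

lemma sum_norm_single_rpow_one_div {ι : Type*} [Fintype ι] [DecidableEq ι] {p : ℝ} (hp : p ≠ 0)
    (i : ι) (v : E) : (∑ j, ‖Pi.single (M := fun _ => E) i v j‖ ^ p) ^ (1 / p) = ‖v‖ := by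
  rw [Fintype.sum_eq_single i fun j hj => by simp [hj, Real.zero_rpow hp], Pi.single_eq_same,
    ← Real.rpow_mul (norm_nonneg v), mul_one_div_cancel hp, Real.rpow_one]

variable (𝕜) in
def IsCohenStronglySummingWith (p q C : ℝ) (u : E → F) : Prop :=
  ∀ (m : ℕ) (x : Fin m → E) (φ : Fin m → F →L[𝕜] 𝕜),
    ∑ i, ‖φ i (u (x i))‖ ≤ C * (∑ i, ‖x i‖ ^ p) ^ (1 / p) * weakNorm q φ

variable (𝕜) in
def IsMultipleCohenStronglySummingWith {N : ℕ} (p q C : ℝ) (T : (Fin N → E) → F) : Prop :=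
  ∀ (m : ℕ) (x : Fin N → Fin m → E) (φ : (Fin N → Fin m) → F →L[𝕜] 𝕜),
    ∑ α : Fin N → Fin m, ‖φ α (T (fun k => x k (α k)))‖ ≤
      C * (∏ k, (∑ j, ‖x k j‖ ^ p) ^ (1 / p)) * weakNorm q φ

theorem IsMultipleCohenStronglySummingWith.slice {n : ℕ} {p q C : ℝ} (hp : p ≠ 0) (hq : q ≠ 0)
    {ψ : (Fin (n + 1) → E) → F} (hψ : IsMultipleCohenStronglySummingWith 𝕜 p q C ψ)
    (a : Fin n → E) :
    IsCohenStronglySummingWith 𝕜 p q (C * ∏ k, ‖a k‖) (fun y => ψ (Fin.snoc a y)) := by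
  rintro (_ | m) x φ
  · simp [Real.zero_rpow (inv_ne_zero hp)]
  let X : Fin (n + 1) → Fin (m + 1) → E := Fin.snoc (fun k => Pi.single 0 (a k)) x
  let e : Fin (m + 1) → Fin (n + 1) → Fin (m + 1) := fun i => Fin.snoc 0 i
  have he : Injective e := fun i j hij => by simpa [e] using congrFun hij (Fin.last n)
  have hXe : ∀ i, (fun k => X k (e i k)) = Fin.snoc a (x i) := fun i => by
    funext k
    induction k using Fin.lastCases <;> simp [X, e]
  have hX : ∏ k, (∑ j, ‖X k j‖ ^ p) ^ (1 / p) = (∏ k, ‖a k‖) * (∑ i, ‖x i‖ ^ p) ^ (1 / p) := by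
    simp only [Fin.prod_univ_castSucc, X, Fin.snoc_castSucc, Fin.snoc_last,
      sum_norm_single_rpow_one_div hp]
  have := hψ (m + 1) X (extend e φ 0)
  rw [Fintype.sum_extend_zero he φ (fun α f => ‖f (ψ fun k => X k (α k))‖) (by simp),
    weakNorm_extend_zero hq he, hX, ← mul_assoc] at this
  simpa only [hXe] using this

end

lemma ContinuousLinearMap.exists_apply_eq_one {𝕜 E : Type*} [RCLike 𝕜] [NormedAddCommGroup E]
    [NormedSpace 𝕜 E] {f : E →L[𝕜] 𝕜} (hf : f ≠ 0) : ∃ a, f a = 1 := by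
  obtain ⟨b, hb⟩ := DFunLike.ne_iff.1 hf
  exact ⟨(f b)⁻¹ • b, by simpa using inv_mul_cancel₀ hb⟩

theorem stmt11_general {𝕜 E F : Type*} [RCLike 𝕜]
    [NormedAddCommGroup E] [NormedSpace 𝕜 E]
    [NormedAddCommGroup F] [NormedSpace 𝕜 F]
    (p q : ℝ) (hp : 1 < p) (hq : 1 / p + 1 / q = 1)
    {n : ℕ}
    (u : E →L[𝕜] F)
    (hu : ¬ ∃ C > 0, ∀ (m : ℕ) (x : Fin m → E) (φ : Fin m → F →L[𝕜] 𝕜),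
        ∑ i, ‖φ i (u (x i))‖ ≤ C * (∑ i, ‖x i‖ ^ p) ^ (1 / p) * weakNorm q φ)
    (φv : E →L[𝕜] 𝕜) (hφv : φv ≠ 0)
    (ψ : (Fin (n + 1) → E) → F)
    (hψ : ∀ x : Fin (n + 1) → E,
      ψ x = (∏ j : Fin n, φv (x j.castSucc)) • u (x (Fin.last n))) :
    ¬ ∃ C > 0, ∀ (m : ℕ) (x : Fin (n + 1) → Fin m → E)
        (φ : (Fin (n + 1) → Fin m) → F →L[𝕜] 𝕜),
        ∑ α : Fin (n + 1) → Fin m, ‖φ α (ψ (fun k => x k (α k)))‖ ≤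
          C * (∏ k, (∑ j, ‖x k j‖ ^ p) ^ (1 / p)) * weakNorm q φ := by
  rintro ⟨C, hC, hψC⟩
  have hp0 : p ≠ 0 := by positivity
  have hq0 : q ≠ 0 := by
    rintro rfl
    simp at hq
    linarith
  obtain ⟨a, ha⟩ := ContinuousLinearMap.exists_apply_eq_one hφv
  have ha0 : 0 < ‖a‖ := norm_pos_iff.2 fun h => by simp [h] at ha
  have hslice : (fun y => ψ (Fin.snoc (fun _ => a) y)) = u := by
    funext y
    simp [hψ, ha]
  have hu' := IsMultipleCohenStronglySummingWith.slice (𝕜 := 𝕜) hp0 hq0 hψC fun _ => a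
  rw [hslice, Finset.prod_const, Finset.card_univ, Fintype.card_fin] at hu'
  exact hu ⟨C * ‖a‖ ^ n, by positivity, hu'⟩

/-- If `u : E → F` is a bounded linear operator which is not Cohen strongly `p`-summing and
`φ ∈ E'` is nonzero, then the `(n+1)`-linear operator
`ψ(x₁,…,x_{n+1}) = φ(x₁)⋯φ(xₙ) u(x_{n+1})` (with `n + 1 ≥ 2`) is not multiple Cohen
strongly `p`-summing. -/
theorem stmt11 {𝕜 E F : Type*} [RCLike 𝕜]
    [NormedAddCommGroup E] [NormedSpace 𝕜 E] [CompleteSpace E]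
    [NormedAddCommGroup F] [NormedSpace 𝕜 F] [CompleteSpace F]
    (p q : ℝ) (hp : 1 < p) (hq : 1 / p + 1 / q = 1)
    {n : ℕ} (hn : 1 ≤ n)
    (u : E →L[𝕜] F)
    (hu : ¬ ∃ C > 0, ∀ (m : ℕ) (x : Fin m → E) (φ : Fin m → F →L[𝕜] 𝕜),
        ∑ i, ‖φ i (u (x i))‖ ≤ C * (∑ i, ‖x i‖ ^ p) ^ (1 / p) * weakNorm q φ)
    (φv : E →L[𝕜] 𝕜) (hφv : φv ≠ 0)
    (ψ : (Fin (n + 1) → E) → F)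
    (hψ : ∀ x : Fin (n + 1) → E,
      ψ x = (∏ j : Fin n, φv (x j.castSucc)) • u (x (Fin.last n))) :
    ¬ ∃ C > 0, ∀ (m : ℕ) (x : Fin (n + 1) → Fin m → E)
        (φ : (Fin (n + 1) → Fin m) → F →L[𝕜] 𝕜),
        ∑ α : Fin (n + 1) → Fin m, ‖φ α (ψ (fun k => x k (α k)))‖ ≤
          C * (∏ k, (∑ j, ‖x k j‖ ^ p) ^ (1 / p)) * weakNorm q φ :=
  stmt11_general p q hp hq u hu φv hφv ψ hψ
end
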